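/- Min-marginal averaging does not decrease the dual bound: suppose variable i appears in subproblems j ∈ S (with |S| = k ≥ 1), with min-marginal differences M_j(i). Update λ̂^j_i := λ^j_i − M_j(i) + (1/k) Σ_{l ∈ S} M_l(i) for j ∈ S and leave all other entries unchanged. Then Σ_j λ̂^j = Σ_j λ^j (feasibility of the split is preserved) and D(λ̂) ≥ D(λ). -/

import Mathlib

open Finset

/-- objective value of a binary vector `x` under costs `l`. -/
def dot {n : ℕ} (l : Fin n → ℝ) (x : Fin n → Bool) : ℝ :=
  ∑ i, if x i then l i else 0

/-- minimum of the objective over a set of binary vectors. -/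
noncomputable def subMin {n : ℕ} (C : Set (Fin n → Bool)) (l : Fin n → ℝ) : ℝ :=
  sInf (Set.image (dot l) C)

/-- Lagrange decomposition dual objective. -/
noncomputable def dualObj {n m : ℕ} (C : Fin m → Set (Fin n → Bool))
    (lam : Fin m → Fin n → ℝ) : ℝ :=
  ∑ j, subMin (C j) (lam j)

/-- min-marginal difference of variable `i` in a subproblem. -/
noncomputable def mmDiff {n : ℕ} (C : Set (Fin n → Bool)) (l : Fin n → ℝ) (i : Fin n) : ℝ :=
  subMin {x ∈ C | x i = true} l - subMin {x ∈ C | x i = false} l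

/-!
Write `m⁰ⱼ` for the optimum of subproblem `j` restricted to `xᵢ = 0`; then the optimum of
subproblem `j` is `m⁰ⱼ + min 0 Mⱼ(i)`. The update changes only the cost of `xᵢ`, by `avg - Mⱼ(i)`,
which leaves `m⁰ⱼ` alone and turns every min-marginal difference into `avg`. Hence the dual gains
`k · min 0 avg - ∑ⱼ min 0 Mⱼ(i) = min 0 (∑ⱼ Mⱼ(i)) - ∑ⱼ min 0 Mⱼ(i) ≥ 0`, while the shifts of
`λᵢ` add up to `k · avg - ∑ⱼ Mⱼ(i) = 0`.
-/

section

variable {n : ℕ}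

lemma subMin_le_dot {C : Set (Fin n → Bool)} {x : Fin n → Bool} (hx : x ∈ C) (l : Fin n → ℝ) :
    subMin C l ≤ dot l x :=
  csInf_le ((Set.toFinite C).image _).bddBelow ⟨x, hx, rfl⟩

lemma exists_dot_eq_subMin {C : Set (Fin n → Bool)} (hC : C.Nonempty) (l : Fin n → ℝ) :
    ∃ x ∈ C, dot l x = subMin C l :=
  (hC.image (dot l)).csInf_mem ((Set.toFinite C).image _)

lemma le_subMin {C : Set (Fin n → Bool)} (hC : C.Nonempty) {a : ℝ} {l : Fin n → ℝ}
    (h : ∀ x ∈ C, a ≤ dot l x) : a ≤ subMin C l :=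
  le_csInf (hC.image _) (by rintro b ⟨x, hx, rfl⟩; exact h x hx)

lemma subMin_eq_add_of_dot_eq_add {C : Set (Fin n → Bool)} (hC : C.Nonempty)
    {l l' : Fin n → ℝ} {d : ℝ} (h : ∀ x ∈ C, dot l' x = dot l x + d) :
    subMin C l' = subMin C l + d := by
  apply le_antisymm
  · obtain ⟨x, hx, hxmin⟩ := exists_dot_eq_subMin hC l
    calc subMin C l' ≤ dot l' x := subMin_le_dot hx l'
      _ = subMin C l + d := by rw [h x hx, hxmin]
  · exact le_subMin hC fun x hx => by rw [h x hx]; linarith [subMin_le_dot hx l]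

lemma subMin_eq_add_min_mmDiff {C : Set (Fin n → Bool)} {i : Fin n}
    (h₀ : {x ∈ C | x i = false}.Nonempty) (h₁ : {x ∈ C | x i = true}.Nonempty)
    (l : Fin n → ℝ) :
    subMin C l = subMin {x ∈ C | x i = false} l + min 0 (mmDiff C l i) := by
  rw [mmDiff, ← min_add_add_left, add_zero, add_sub_cancel]
  apply le_antisymm
  · obtain ⟨x₀, hx₀, hx₀min⟩ := exists_dot_eq_subMin h₀ l
    obtain ⟨x₁, hx₁, hx₁min⟩ := exists_dot_eq_subMin h₁ l
    exact le_min (hx₀min ▸ subMin_le_dot hx₀.1 l) (hx₁min ▸ subMin_le_dot hx₁.1 l)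
  · refine le_subMin (h₀.mono fun x hx => hx.1) fun x hx => ?_
    cases hxi : x i
    · exact (min_le_left _ _).trans (subMin_le_dot (C := {x ∈ C | x i = false}) ⟨hx, hxi⟩ l)
    · exact (min_le_right _ _).trans (subMin_le_dot (C := {x ∈ C | x i = true}) ⟨hx, hxi⟩ l)

lemma dot_add_single (l : Fin n → ℝ) (i : Fin n) (d : ℝ) (x : Fin n → Bool) :
    dot (l + Pi.single i d) x = dot l x + if x i then d else 0 := by
  simp only [dot, Pi.add_apply, ite_add_zero, sum_add_distrib]
  congr 1
  rw [sum_eq_single i (fun k _ hk => by simp [hk]) (by simp)]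
  simp

lemma subMin_add_single_of_false (C : Set (Fin n → Bool)) {i : Fin n}
    (h₀ : {x ∈ C | x i = false}.Nonempty) (l : Fin n → ℝ) (d : ℝ) :
    subMin {x ∈ C | x i = false} (l + Pi.single i d) = subMin {x ∈ C | x i = false} l := by
  simpa using subMin_eq_add_of_dot_eq_add h₀ (d := 0) fun x hx => by
    simp [dot_add_single, hx.2]

lemma subMin_add_single_of_true (C : Set (Fin n → Bool)) {i : Fin n}
    (h₁ : {x ∈ C | x i = true}.Nonempty) (l : Fin n → ℝ) (d : ℝ) :
    subMin {x ∈ C | x i = true} (l + Pi.single i d) = subMin {x ∈ C | x i = true} l + d :=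
  subMin_eq_add_of_dot_eq_add h₁ fun x hx => by simp [dot_add_single, hx.2]

lemma subMin_add_single {C : Set (Fin n → Bool)} {i : Fin n}
    (h₀ : {x ∈ C | x i = false}.Nonempty) (h₁ : {x ∈ C | x i = true}.Nonempty)
    (l : Fin n → ℝ) (d : ℝ) :
    subMin C (l + Pi.single i d) = subMin {x ∈ C | x i = false} l + min 0 (mmDiff C l i + d) := by
  rw [subMin_eq_add_min_mmDiff h₀ h₁, mmDiff, subMin_add_single_of_false C h₀,
    subMin_add_single_of_true C h₁, mmDiff]
  ring_nf

lemma eq_add_single_sub_of_eq_off {ι : Type*} [DecidableEq ι] {f g : ι → ℝ} {i : ι}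
    (h : ∀ k, k ≠ i → g k = f k) : g = f + Pi.single i (g i - f i) := by
  funext k
  by_cases hk : k = i
  · subst hk; simp
  · simp [h k hk, hk]

lemma Finset.sum_min_zero_le {ι : Type*} (s : Finset ι) (f : ι → ℝ) :
    ∑ j ∈ s, min 0 (f j) ≤ min 0 (∑ j ∈ s, f j) :=
  le_min (sum_nonpos fun _ _ => min_le_left _ _) (sum_le_sum fun _ _ => min_le_right _ _)

end

theorem min_marginal_averaging_nondecreasing_general {n m : ℕ} (c : Fin n → ℝ)
    (C : Fin m → Set (Fin n → Bool))
    (lam lamHat : Fin m → Fin n → ℝ) (hsplit : ∑ j, lam j = c)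
    (i : Fin n) (S : Finset (Fin m))
    (hfix : ∀ j ∈ S, {x ∈ C j | x i = false}.Nonempty ∧ {x ∈ C j | x i = true}.Nonempty)
    (hout : ∀ j ∉ S, lamHat j = lam j)
    (hsame : ∀ j ∈ S, ∀ k, k ≠ i → lamHat j k = lam j k)
    (hupd : ∀ j ∈ S, lamHat j i = lam j i - mmDiff (C j) (lam j) i
        + (1 / (S.card : ℝ)) * ∑ l ∈ S, mmDiff (C l) (lam l) i) :
    (∑ j, lamHat j = c) ∧ dualObj C lam ≤ dualObj C lamHat := by
  set M := fun j => mmDiff (C j) (lam j) i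
  set avg := S.expect M
  have hshift : ∀ j ∈ S, lamHat j i - lam j i = avg - M j := fun j hj => by
    rw [hupd j hj, one_div_mul_eq_div, ← expect_eq_sum_div_card]; ring
  have hsingle : ∀ j, lamHat j = lam j + Pi.single i (lamHat j i - lam j i) := fun j => by
    by_cases hj : j ∈ S
    · exact eq_add_single_sub_of_eq_off (hsame j hj)
    · simp [hout j hj]
  have hbalance : ∑ j, (lamHat j i - lam j i) = 0 := by
    rw [← sum_subset (subset_univ S) fun j _ hj => by simp [hout j hj],
      sum_congr rfl hshift, sum_sub_distrib, sum_const, nsmul_eq_mul, card_mul_expect, sub_self]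
  have hgain : ∀ j ∈ S,
      subMin (C j) (lamHat j) - subMin (C j) (lam j) = min 0 avg - min 0 (M j) := fun j hj => by
    obtain ⟨h₀, h₁⟩ := hfix j hj
    rw [hsingle j, subMin_add_single h₀ h₁, hshift j hj, subMin_eq_add_min_mmDiff h₀ h₁,
      add_sub_cancel]
    ring
  constructor
  · have hsum_single : ∑ j, (Pi.single i (lamHat j i - lam j i) : Fin n → ℝ)
        = Pi.single i (∑ j, (lamHat j i - lam j i)) :=
      (map_sum (AddMonoidHom.single (fun _ : Fin n => ℝ) i) _ _).symm
    rw [← hsplit, sum_congr rfl fun j _ => hsingle j, sum_add_distrib, hsum_single, hbalance,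
      Pi.single_zero, add_zero]
  · have hmin_sum : (#S : ℝ) * min 0 avg = min 0 (∑ j ∈ S, M j) := by
      rw [mul_min_of_nonneg _ _ (Nat.cast_nonneg _), mul_zero, card_mul_expect]
    rw [← sub_nonneg, dualObj, dualObj, ← sum_sub_distrib,
      ← sum_subset (subset_univ S) fun j _ hj => by simp [hout j hj], sum_congr rfl hgain,
      sum_sub_distrib, sum_const, nsmul_eq_mul, hmin_sum, sub_nonneg]
    exact S.sum_min_zero_le M

theorem min_marginal_averaging_nondecreasing {n m : ℕ} (c : Fin n → ℝ)
    (C : Fin m → Set (Fin n → Bool)) (hC : ∀ j, (C j).Nonempty)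
    (lam lamHat : Fin m → Fin n → ℝ) (hsplit : ∑ j, lam j = c)
    (i : Fin n) (S : Finset (Fin m)) (hS : S.Nonempty)
    (hfix : ∀ j ∈ S, {x ∈ C j | x i = false}.Nonempty ∧ {x ∈ C j | x i = true}.Nonempty)
    (hout : ∀ j ∉ S, lamHat j = lam j)
    (hsame : ∀ j ∈ S, ∀ k, k ≠ i → lamHat j k = lam j k)
    (hupd : ∀ j ∈ S, lamHat j i = lam j i - mmDiff (C j) (lam j) i
        + (1 / (S.card : ℝ)) * ∑ l ∈ S, mmDiff (C l) (lam l) i) :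
    (∑ j, lamHat j = c) ∧ dualObj C lam ≤ dualObj C lamHat :=
  min_marginal_averaging_nondecreasing_general c C lam lamHat hsplit i S hfix hout hsame hupd
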